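/- arXiv:1506.01478 — 4 statements merged into one kernel-verified Lean document; each statement's English description precedes it below -/
import Mathlib

section
/- Let κ>0 and let P(s,t,x,dy) be a transition function on ℝ satisfying the κ-scaling property. Then for all 0<s≤t≤u, all a,b∈[0,1], all x∈ℝ and every measurable set B⊆ℝ: (i) ∫ P(0,s,0,dx) P(at,t,(at/s)^κ x, B) = P(0,t,0,B); and (ii) ∫ P(at,t,(at/s)^κ x, dy) P(bu,u,(bu/t)^κ y, B) = P(abu,u,(abu/s)^κ x, B). -/
open MeasureTheory ProbabilityTheory Real Filter Set

noncomputable section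

/-- A transition function on `ℝ`: a family of probability measures `P s t x` (for `0 ≤ s ≤ t`),
measurable in `x`, with `P s s x = δ_x`, satisfying the Chapman–Kolmogorov equations. -/
structure IsTransitionFunction (P : ℝ → ℝ → ℝ → Measure ℝ) : Prop where
  prob : ∀ s t x, IsProbabilityMeasure (P s t x)
  meas : ∀ s t (B : Set ℝ), MeasurableSet B → Measurable fun x => P s t x B
  dirac : ∀ s x, 0 ≤ s → P s s x = Measure.dirac x
  chapman : ∀ s t u x (B : Set ℝ), 0 ≤ s → s ≤ t → t ≤ u → MeasurableSet B →
    ∫⁻ y, P t u y B ∂(P s t x) = P s u x B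

/-- The `κ`-scaling property: `P(cs, ct, c^κ x, c^κ dy) = P(s, t, x, dy)` for all `c > 0`. -/
def HasScaling (κ : ℝ) (P : ℝ → ℝ → ℝ → Measure ℝ) : Prop :=
  ∀ c s t x, 0 < c → 0 ≤ s → s ≤ t →
    P (c * s) (c * t) (c ^ κ * x) = Measure.map (fun y => c ^ κ * y) (P s t x)

/-- For a transition function `P` with the `κ`-scaling property, for all
`0 < s ≤ t ≤ u`, `a, b ∈ [0,1]`, `x ∈ ℝ` and measurable `B ⊆ ℝ`:
(i) `∫ P(0,s,0,dx) P(at, t, (at/s)^κ x, B) = P(0,t,0,B)`, and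
(ii) `∫ P(at,t,(at/s)^κ x, dy) P(bu, u, (bu/t)^κ y, B) = P(abu, u, (abu/s)^κ x, B)`. -/
theorem stmt0 (κ : ℝ) (hκ : 0 < κ) (P : ℝ → ℝ → ℝ → Measure ℝ)
    (hP : IsTransitionFunction P) (hscal : HasScaling κ P)
    (s t u : ℝ) (hs : 0 < s) (hst : s ≤ t) (htu : t ≤ u)
    (a b : ℝ) (ha : a ∈ Set.Icc (0:ℝ) 1) (hb : b ∈ Set.Icc (0:ℝ) 1)
    (x : ℝ) (B : Set ℝ) (hB : MeasurableSet B) :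
    (∫⁻ z, P (a * t) t ((a * t / s) ^ κ * z) B ∂(P 0 s 0) = P 0 t 0 B) ∧
    (∫⁻ y, P (b * u) u ((b * u / t) ^ κ * y) B ∂(P (a * t) t ((a * t / s) ^ κ * x))
      = P (a * b * u) u ((a * b * u / s) ^ κ * x) B) := by
  obtain ⟨ha0, ha1⟩ := ha
  obtain ⟨hb0, hb1⟩ := hb
  have ht : 0 < t := hs.trans_le hst
  have hu : 0 < u := ht.trans_le htu
  haveI := hP.prob
  constructor
  · -- Part (i)
    rcases eq_or_lt_of_le ha0 with h0 | h0
    · -- a = 0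
      rw [← h0]
      simp only [zero_mul, zero_div, Real.zero_rpow hκ.ne']
      rw [lintegral_const, measure_univ, mul_one]
    · -- a > 0
      have hc : 0 < a * t / s := by positivity
      have key := hscal (a * t / s) 0 s 0 hc le_rfl hs.le
      rw [mul_zero, div_mul_cancel₀ _ hs.ne', mul_zero] at key
      have hat : (0:ℝ) ≤ a * t := by positivity
      calc ∫⁻ z, P (a * t) t ((a * t / s) ^ κ * z) B ∂(P 0 s 0)
          = ∫⁻ y, P (a * t) t y B ∂(P 0 (a * t) 0) := by
            rw [key, lintegral_map (hP.meas _ _ B hB) (measurable_const_mul _)]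
        _ = P 0 t 0 B := hP.chapman 0 (a * t) t 0 B le_rfl hat
            (mul_le_of_le_one_left ht.le ha1) hB
  · -- Part (ii)
    rcases eq_or_lt_of_le hb0 with h0 | h0
    · -- b = 0
      rw [← h0]
      simp only [zero_mul, mul_zero, zero_div, Real.zero_rpow hκ.ne']
      rw [lintegral_const, measure_univ, mul_one]
    · -- b > 0
      have has : (0:ℝ) ≤ a * s := by positivity
      have hass : a * s ≤ s := mul_le_of_le_one_left hs.le ha1
      have hsb : s ≤ s / b := le_div_self hs.le h0 hb1
      have hcb : 0 < b * u / s := by positivity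
      have hts : 0 < t / s := by positivity
      have key1 := hscal (t / s) (a * s) s (a ^ κ * x) hts has hass
      have e1 : t / s * (a * s) = a * t := by field_simp <;> ring
      have e2 : t / s * s = t := div_mul_cancel₀ _ hs.ne'
      have e3 : (t / s) ^ κ * (a ^ κ * x) = (a * t / s) ^ κ * x := by
        rw [show a * t / s = t / s * a by ring, Real.mul_rpow hts.le ha0]
        ring
      rw [e1, e2, e3] at key1
      have key2 : ∀ z : ℝ, P (b * u) u ((b * u / s) ^ κ * z) B
          = P s (s / b) z ((fun y => (b * u / s) ^ κ * y) ⁻¹' B) := by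
        intro z
        have h := hscal (b * u / s) s (s / b) z hcb hs.le hsb
        have f1 : b * u / s * s = b * u := div_mul_cancel₀ _ hs.ne'
        have f2 : b * u / s * (s / b) = u := by field_simp <;> ring
        rw [f1, f2] at h
        rw [h, Measure.map_apply (measurable_const_mul _) hB]
      have key3 := hscal (b * u / s) (a * s) (s / b) (a ^ κ * x) hcb has (hass.trans hsb)
      have g1 : b * u / s * (a * s) = a * b * u := by field_simp <;> ring
      have g2 : b * u / s * (s / b) = u := by field_simp <;> ring
      have g3 : (b * u / s) ^ κ * (a ^ κ * x) = (a * b * u / s) ^ κ * x := by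
        rw [show a * b * u / s = b * u / s * a by ring, Real.mul_rpow hcb.le ha0]
        ring
      rw [g1, g2, g3] at key3
      have hB' : MeasurableSet ((fun y => (b * u / s) ^ κ * y) ⁻¹' B) :=
        hB.preimage (measurable_const_mul _)
      calc ∫⁻ y, P (b * u) u ((b * u / t) ^ κ * y) B ∂(P (a * t) t ((a * t / s) ^ κ * x))
          = ∫⁻ z, P (b * u) u ((b * u / t) ^ κ * ((t / s) ^ κ * z)) B
              ∂(P (a * s) s (a ^ κ * x)) := by
            have hf : Measurable fun y : ℝ => P (b * u) u ((b * u / t) ^ κ * y) B :=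
              (hP.meas _ _ B hB).comp (measurable_const_mul _)
            rw [key1, lintegral_map hf (measurable_const_mul _)]
        _ = ∫⁻ z, P s (s / b) z ((fun y => (b * u / s) ^ κ * y) ⁻¹' B)
              ∂(P (a * s) s (a ^ κ * x)) := by
            refine lintegral_congr fun z => ?_
            rw [← mul_assoc, ← Real.mul_rpow (by positivity) hts.le,
              show b * u / t * (t / s) = b * u / s by field_simp <;> ring, key2]
        _ = P (a * s) (s / b) (a ^ κ * x) ((fun y => (b * u / s) ^ κ * y) ⁻¹' B) :=
            hP.chapman (a * s) s (s / b) (a ^ κ * x) _ has hass hsb hB'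
        _ = P (a * b * u) u ((a * b * u / s) ^ κ * x) B := by
            rw [key3, Measure.map_apply (measurable_const_mul _) hB]

end
end

section
/- Let κ>0, let P be a transition function on ℝ satisfying the κ-scaling property, and let (G_{s,t})_{0≤s≤t} be a family of probability measures on (0,1] with G_{s,s}=δ₁ satisfying ∫∫ h(ab) G_{s,t}(da) G_{t,u}(db) = ∫ h(r) G_{s,u}(dr) for every bounded measurable h and all s≤t≤u. Define P̃(0,t,0,dy) = P(0,t,0,dy) and, for 0<s≤t, P̃(s,t,x,dy) = ∫_{(0,1]} P(rt, t, (t/s)^κ r^κ x, dy) G_{s,t}(dr). Then P̃ is a transition function: for each (s,t,x) it is a probability measure, it is measurable in x, P̃(s,s,x,·)=δ_x, and P̃ satisfies the Chapman–Kolmogorov equations ∫ P̃(s,t,x,dy) P̃(t,u,y,B) = P̃(s,u,x,B) for all s≤t≤u, x and measurable B. -/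
/-!
For `s > 0`, `P̃(s,t,x,·)` runs `P` from the random time `rt`, `r ~ G_{s,t}`, with the starting
point rescaled by `((t/s) r)^κ`. Composing two such steps, with `r = a` and then `r = b`, the
`κ`-scaling of `P` with factor `bu/t` turns the first step into a step from time `abu` to time `bu`,
and the Chapman–Kolmogorov equation of `P` merges the two into a single step from time `abu`
with scale `((u/s) ab)^κ`. Averaging over `a` and `b`, the convolution identity for `G`
replaces the product `ab` by one `r ~ G_{s,u}`, which is the Chapman–Kolmogorov equation of `P̃`.
-/

open MeasureTheory ProbabilityTheory Real Filter Set
open scoped ENNReal NNReal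

noncomputable section

/-- The randomised transition function `P̃(0,t,0,dy) = P(0,t,0,dy)` and, for `0 < s ≤ t`,
`P̃(s,t,x,dy) = ∫_{(0,1]} P(rt, t, (t/s)^κ r^κ x, dy) G_{s,t}(dr)`. -/
def Ptilde (κ : ℝ) (P : ℝ → ℝ → ℝ → Measure ℝ) (G : ℝ → ℝ → Measure ℝ)
    (s t x : ℝ) : Measure ℝ :=
  if s = 0 then P 0 t 0
  else (G s t).bind fun r => P (r * t) t ((t / s) ^ κ * r ^ κ * x)

def IsJointlyMeasurable (P : ℝ → ℝ → ℝ → Measure ℝ) : Prop :=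
  ∀ (t : ℝ) (B : Set ℝ), MeasurableSet B → Measurable fun p : ℝ × ℝ => P p.1 t p.2 B

section

variable {κ : ℝ} {P : ℝ → ℝ → ℝ → Measure ℝ} {G : ℝ → ℝ → Measure ℝ}

theorem IsJointlyMeasurable.measurable_comp (hPmeas : IsJointlyMeasurable P)
    {α : Type*} [MeasurableSpace α] {f g : α → ℝ} (hf : Measurable f) (hg : Measurable g)
    (t : ℝ) : Measurable fun a => P (f a) t (g a) :=
  Measure.measurable_of_measurable_coe _ fun B hB => (hPmeas t B hB).comp (hf.prodMk hg)

theorem IsJointlyMeasurable.measurable_comp_apply (hPmeas : IsJointlyMeasurable P)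
    {α : Type*} [MeasurableSpace α] {f g : α → ℝ} (hf : Measurable f) (hg : Measurable g)
    (t : ℝ) {B : Set ℝ} (hB : MeasurableSet B) : Measurable fun a => P (f a) t (g a) B :=
  (Measure.measurable_coe hB).comp (hPmeas.measurable_comp hf hg t)

theorem Ptilde_zero_left (t x : ℝ) : Ptilde κ P G 0 t x = P 0 t 0 := by
  rw [Ptilde, if_pos rfl]

theorem Ptilde_of_ne_zero {s : ℝ} (hs : s ≠ 0) (t x : ℝ) :
    Ptilde κ P G s t x = (G s t).bind fun r => P (r * t) t ((t / s) ^ κ * r ^ κ * x) := by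
  rw [Ptilde, if_neg hs]

theorem Ptilde_apply_of_ne_zero (hPmeas : IsJointlyMeasurable P) {s : ℝ} (hs : s ≠ 0)
    (t x : ℝ) {B : Set ℝ} (hB : MeasurableSet B) :
    Ptilde κ P G s t x B = ∫⁻ r, P (r * t) t ((t / s) ^ κ * r ^ κ * x) B ∂(G s t) := by
  rw [Ptilde_of_ne_zero hs, Measure.bind_apply hB]
  exact (hPmeas.measurable_comp (by fun_prop) (by fun_prop) t).aemeasurable

theorem isProbabilityMeasure_Ptilde (hP : IsTransitionFunction P) (hPmeas : IsJointlyMeasurable P)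
    {s t : ℝ} (hGst : IsProbabilityMeasure (G s t)) (x : ℝ) :
    IsProbabilityMeasure (Ptilde κ P G s t x) := by
  rcases eq_or_ne s 0 with rfl | hs
  · rw [Ptilde_zero_left]
    exact hP.prob 0 t 0
  · constructor
    simp [Ptilde_apply_of_ne_zero hPmeas hs t x MeasurableSet.univ, (hP.prob _ _ _).measure_univ]

theorem measurable_Ptilde_apply (hPmeas : IsJointlyMeasurable P)
    {s t : ℝ} [SFinite (G s t)] {B : Set ℝ} (hB : MeasurableSet B) :
    Measurable fun x => Ptilde κ P G s t x B := by
  rcases eq_or_ne s 0 with rfl | hs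
  · simp only [Ptilde_zero_left]
    exact measurable_const
  · simp only [Ptilde_apply_of_ne_zero hPmeas hs t _ hB]
    exact Measurable.lintegral_prod_right' (hPmeas.measurable_comp_apply
      (f := fun p : ℝ × ℝ => p.2 * t) (g := fun p => (t / s) ^ κ * p.2 ^ κ * p.1)
      (by fun_prop) (by fun_prop) t hB)

theorem Ptilde_self (hP : IsTransitionFunction P) (hPmeas : IsJointlyMeasurable P)
    (hGdirac : ∀ s, 0 ≤ s → G s s = Measure.dirac 1) {s : ℝ} (hs : 0 < s) (x : ℝ) :
    Ptilde κ P G s s x = Measure.dirac x := by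
  rw [Ptilde_of_ne_zero hs.ne', hGdirac s hs.le,
    Measure.dirac_bind (hPmeas.measurable_comp (by fun_prop) (by fun_prop) s)]
  simpa [div_self hs.ne'] using hP.dirac s x hs.le

/- Scaling by `c` carries `P(σ, t, z, ·)` to `P(cσ, ct, c^κ z, ·)`, after which it is the
Chapman–Kolmogorov equation of `P` at the times `cσ ≤ ct ≤ u`. -/
theorem HasScaling.lintegral_transition_apply (hscal : HasScaling κ P)
    (hP : IsTransitionFunction P) (hPmeas : IsJointlyMeasurable P) {σ t u c : ℝ}
    (hσ : 0 ≤ σ) (hσt : σ ≤ t) (hc : 0 < c) (hctu : c * t ≤ u) (z : ℝ) {B : Set ℝ}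
    (hB : MeasurableSet B) :
    ∫⁻ y, P (c * t) u (c ^ κ * y) B ∂(P σ t z) = P (c * σ) u (c ^ κ * z) B := by
  have hF : Measurable fun w => P (c * t) u w B :=
    hPmeas.measurable_comp_apply measurable_const measurable_id u hB
  rw [← lintegral_map hF (measurable_const_mul _), ← hscal c σ t z hc hσ hσt]
  exact hP.chapman _ _ _ _ _ (by positivity) (by gcongr) hctu hB

theorem lintegral_Ptilde_apply (hscal : HasScaling κ P) (hP : IsTransitionFunction P)
    (hPmeas : IsJointlyMeasurable P) {σ t u : ℝ} [SFinite (G t u)]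
    (hGtu : G t u (Ioc (0:ℝ) 1)ᶜ = 0) (hσ : 0 ≤ σ) (hσt : σ ≤ t) (htu : t ≤ u) (ht : 0 < t)
    (z : ℝ) {B : Set ℝ} (hB : MeasurableSet B) :
    ∫⁻ y, Ptilde κ P G t u y B ∂(P σ t z)
      = ∫⁻ b, P (b * u / t * σ) u ((b * u / t) ^ κ * z) B ∂(G t u) := by
  have := hP.prob σ t z
  simp only [Ptilde_apply_of_ne_zero hPmeas ht.ne' u _ hB]
  rw [lintegral_lintegral_swap (hPmeas.measurable_comp_apply (f := fun p : ℝ × ℝ => p.2 * u)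
    (g := fun p => (u / t) ^ κ * p.2 ^ κ * p.1) (by fun_prop) (by fun_prop) u hB).aemeasurable]
  refine lintegral_congr_ae (Eventually.mono (mem_ae_iff.mpr hGtu) fun b ⟨hb0, hb1⟩ => ?_)
  have hu : 0 < u := ht.trans_le htu
  have hc : 0 < b * u / t := by positivity
  have hct : b * u / t * t = b * u := by field_simp
  have hcoef : (u / t) ^ κ * b ^ κ = (b * u / t) ^ κ := by
    rw [← mul_rpow (by positivity) hb0.le]
    ring_nf
  have key := hscal.lintegral_transition_apply (u := u) hP hPmeas hσ hσt hc
    (by rw [hct]; nlinarith) z hB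
  rw [hct] at key
  simpa only [hcoef] using key

theorem Ptilde_chapman (hscal : HasScaling κ P) (hP : IsTransitionFunction P)
    (hPmeas : IsJointlyMeasurable P) {s t u : ℝ} [SFinite (G t u)]
    (hGst : G s t (Ioc (0:ℝ) 1)ᶜ = 0) (hGtu : G t u (Ioc (0:ℝ) 1)ᶜ = 0)
    (hGconv : ∀ h : ℝ → ℝ≥0∞, Measurable h →
      ∫⁻ a, ∫⁻ b, h (a * b) ∂(G t u) ∂(G s t) = ∫⁻ r, h r ∂(G s u))
    (hs : 0 < s) (hst : s ≤ t) (htu : t ≤ u) (x : ℝ) {B : Set ℝ}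
    (hB : MeasurableSet B) :
    ∫⁻ y, Ptilde κ P G t u y B ∂(Ptilde κ P G s t x) = Ptilde κ P G s u x B := by
  have ht : 0 < t := hs.trans_le hst
  rw [Ptilde_of_ne_zero hs.ne' t x, Measure.lintegral_bind
      (hPmeas.measurable_comp (by fun_prop) (by fun_prop) t).aemeasurable
      (measurable_Ptilde_apply hPmeas hB).aemeasurable,
    Ptilde_apply_of_ne_zero hPmeas hs.ne' u x hB,
    ← hGconv _ (hPmeas.measurable_comp_apply (by fun_prop) (by fun_prop) u hB)]
  refine lintegral_congr_ae (Eventually.mono (mem_ae_iff.mpr hGst) fun a ⟨ha0, ha1⟩ => ?_)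
  dsimp only
  rw [lintegral_Ptilde_apply hscal hP hPmeas hGtu (by positivity)
    (mul_le_of_le_one_left ht.le ha1) htu ht _ hB]
  refine lintegral_congr_ae (Eventually.mono (mem_ae_iff.mpr hGtu) fun b ⟨hb0, _⟩ => ?_)
  dsimp only
  have hu : 0 < u := ht.trans_le htu
  have htime : b * u / t * (a * t) = a * b * u := by field_simp
  have hcoef : (b * u / t) ^ κ * ((t / s) ^ κ * a ^ κ) = (u / s) ^ κ * (a * b) ^ κ := by
    rw [← mul_rpow (by positivity) ha0.le, ← mul_rpow (by positivity) (by positivity),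
      ← mul_rpow (by positivity) (by positivity)]
    congr 1
    field_simp
  simp only [htime, ← hcoef, mul_assoc]

theorem Ptilde_chapman_zero (hscal : HasScaling κ P) (hP : IsTransitionFunction P)
    (hPmeas : IsJointlyMeasurable P) {t u : ℝ} [IsProbabilityMeasure (G t u)]
    (hGtu : G t u (Ioc (0:ℝ) 1)ᶜ = 0) (ht : 0 < t) (htu : t ≤ u) {B : Set ℝ}
    (hB : MeasurableSet B) :
    ∫⁻ y, Ptilde κ P G t u y B ∂(Ptilde κ P G 0 t 0) = Ptilde κ P G 0 u 0 B := by
  rw [Ptilde_zero_left, Ptilde_zero_left,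
    lintegral_Ptilde_apply hscal hP hPmeas hGtu le_rfl ht.le htu ht 0 hB]
  simp

end

theorem stmt1_general (κ : ℝ) (P : ℝ → ℝ → ℝ → Measure ℝ)
    (hP : IsTransitionFunction P) (hscal : HasScaling κ P)
    -- joint measurability of `(s, x) ↦ P s t x B` (part of the regularity of `P`)
    (hPmeas : ∀ (t : ℝ) (B : Set ℝ), MeasurableSet B →
      Measurable fun p : ℝ × ℝ => P p.1 t p.2 B)
    (G : ℝ → ℝ → Measure ℝ)
    (hGprob : ∀ s t, 0 ≤ s → s ≤ t → IsProbabilityMeasure (G s t))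
    (hGsupp : ∀ s t, 0 ≤ s → s ≤ t → G s t ((Set.Ioc (0:ℝ) 1)ᶜ) = 0)
    (hGdirac : ∀ s, 0 ≤ s → G s s = Measure.dirac 1)
    (hGconv : ∀ s t u, 0 ≤ s → s ≤ t → t ≤ u → ∀ h : ℝ → ℝ≥0∞, Measurable h →
      ∫⁻ a, ∫⁻ b, h (a * b) ∂(G t u) ∂(G s t) = ∫⁻ r, h r ∂(G s u)) :
    -- `P̃(s,t,x,·)` is a probability measure
    (∀ s t x, 0 ≤ s → s ≤ t → IsProbabilityMeasure (Ptilde κ P G s t x)) ∧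
    -- `P̃(s,t,·,B)` is measurable
    (∀ s t (B : Set ℝ), 0 ≤ s → s ≤ t → MeasurableSet B →
      Measurable fun x => Ptilde κ P G s t x B) ∧
    -- `P̃(s,s,x,·) = δ_x`
    (∀ s x, 0 < s → Ptilde κ P G s s x = Measure.dirac x) ∧
    (Ptilde κ P G 0 0 0 = Measure.dirac 0) ∧
    -- Chapman–Kolmogorov equations
    (∀ s t u x (B : Set ℝ), 0 < s → s ≤ t → t ≤ u → MeasurableSet B →
      ∫⁻ y, Ptilde κ P G t u y B ∂(Ptilde κ P G s t x) = Ptilde κ P G s u x B) ∧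
    (∀ t u (B : Set ℝ), 0 < t → t ≤ u → MeasurableSet B →
      ∫⁻ y, Ptilde κ P G t u y B ∂(Ptilde κ P G 0 t 0) = Ptilde κ P G 0 u 0 B) := by
  refine ⟨fun s t x hs hst => isProbabilityMeasure_Ptilde hP hPmeas (hGprob s t hs hst) x,
    fun s t B hs hst hB => have := hGprob s t hs hst; measurable_Ptilde_apply hPmeas hB,
    fun s x hs => Ptilde_self hP hPmeas hGdirac hs x, ?_,
    fun s t u x B hs hst htu hB => ?_, fun t u B ht htu hB => ?_⟩
  · rw [Ptilde_zero_left]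
    exact hP.dirac 0 0 le_rfl
  · have := hGprob t u (hs.le.trans hst) htu
    exact Ptilde_chapman hscal hP hPmeas (hGsupp s t hs.le hst) (hGsupp t u (hs.le.trans hst) htu)
      (hGconv s t u hs.le hst htu) hs hst htu x hB
  · have := hGprob t u ht.le htu
    exact Ptilde_chapman_zero hscal hP hPmeas (hGsupp t u ht.le htu) ht htu hB

/-- Given a transition function `P` with the `κ`-scaling property and a family
`(G_{s,t})` of probability measures on `(0,1]` with `G_{s,s} = δ₁` satisfying
`∫∫ h(ab) G_{s,t}(da) G_{t,u}(db) = ∫ h(r) G_{s,u}(dr)`, the randomised family `P̃` is a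
transition function: each `P̃(s,t,x,·)` is a probability measure, it is measurable in `x`,
`P̃(s,s,x,·) = δ_x`, and the Chapman–Kolmogorov equations hold. -/
theorem stmt1 (κ : ℝ) (hκ : 0 < κ) (P : ℝ → ℝ → ℝ → Measure ℝ)
    (hP : IsTransitionFunction P) (hscal : HasScaling κ P)
    -- joint measurability of `(s, x) ↦ P s t x B` (part of the regularity of `P`)
    (hPmeas : ∀ (t : ℝ) (B : Set ℝ), MeasurableSet B →
      Measurable fun p : ℝ × ℝ => P p.1 t p.2 B)
    (G : ℝ → ℝ → Measure ℝ)
    (hGprob : ∀ s t, 0 ≤ s → s ≤ t → IsProbabilityMeasure (G s t))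
    (hGsupp : ∀ s t, 0 ≤ s → s ≤ t → G s t ((Set.Ioc (0:ℝ) 1)ᶜ) = 0)
    (hGdirac : ∀ s, 0 ≤ s → G s s = Measure.dirac 1)
    (hGconv : ∀ s t u, 0 ≤ s → s ≤ t → t ≤ u → ∀ h : ℝ → ℝ≥0∞, Measurable h →
      ∫⁻ a, ∫⁻ b, h (a * b) ∂(G t u) ∂(G s t) = ∫⁻ r, h r ∂(G s u)) :
    -- `P̃(s,t,x,·)` is a probability measure
    (∀ s t x, 0 ≤ s → s ≤ t → IsProbabilityMeasure (Ptilde κ P G s t x)) ∧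
    -- `P̃(s,t,·,B)` is measurable
    (∀ s t (B : Set ℝ), 0 ≤ s → s ≤ t → MeasurableSet B →
      Measurable fun x => Ptilde κ P G s t x B) ∧
    -- `P̃(s,s,x,·) = δ_x`
    (∀ s x, 0 < s → Ptilde κ P G s s x = Measure.dirac x) ∧
    (Ptilde κ P G 0 0 0 = Measure.dirac 0) ∧
    -- Chapman–Kolmogorov equations
    (∀ s t u x (B : Set ℝ), 0 < s → s ≤ t → t ≤ u → MeasurableSet B →
      ∫⁻ y, Ptilde κ P G t u y B ∂(Ptilde κ P G s t x) = Ptilde κ P G s u x B) ∧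
    (∀ t u (B : Set ℝ), 0 < t → t ≤ u → MeasurableSet B →
      ∫⁻ y, Ptilde κ P G t u y B ∂(Ptilde κ P G 0 t 0) = Ptilde κ P G 0 u 0 B) :=
  stmt1_general κ P hP hscal hPmeas G hGprob hGsupp hGdirac hGconv

end
end

section
/- In the setting where P̃ is built from a transition function P with the κ-scaling property and a family (G_{s,t}) of probability measures on (0,1], if G_{s,t} depends on s and t only through the ratio t/s (i.e. G_{s,t} = G_{t/s} for a family (G_u)_{u≥1}), then P̃ inherits the κ-scaling property: P̃(cs,ct,c^κ x, c^κ dy) = P̃(s,t,x,dy) for all c>0, 0≤s≤t and x. -/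
open MeasureTheory ProbabilityTheory Real Filter Set
open scoped ENNReal NNReal

noncomputable section

/-- The randomised transition function built from `P` and a ratio-indexed family `(G_u)_{u ≥ 1}`,
i.e. `G_{s,t} = G_{t/s}`: `P̃(0,t,0,dy) = P(0,t,0,dy)` and, for `0 < s ≤ t`,
`P̃(s,t,x,dy) = ∫_{(0,1]} P(rt, t, (t/s)^κ r^κ x, dy) G_{t/s}(dr)`. -/
def PtildeR (κ : ℝ) (P : ℝ → ℝ → ℝ → Measure ℝ) (G : ℝ → Measure ℝ)
    (s t x : ℝ) : Measure ℝ :=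
  if s = 0 then P 0 t 0
  else (G (t / s)).bind fun r => P (r * t) t ((t / s) ^ κ * r ^ κ * x)


lemma bind_map_comm (μ : Measure ℝ) (g : ℝ → Measure ℝ) (e : ℝ ≃ᵐ ℝ) :
    μ.bind (fun r => (g r).map e) = (μ.bind g).map e := by
  by_cases hg : AEMeasurable g μ
  · set g' := hg.mk g with hg'
    have hae : g =ᵐ[μ] g' := hg.ae_eq_mk
    have hmeas : Measurable g' := hg.measurable_mk
    have h1 : μ.bind g = μ.bind g' := by unfold Measure.bind; rw [Measure.map_congr hae]
    have h2 : μ.bind (fun r => (g r).map e) = μ.bind (fun r => (g' r).map e) := by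
      unfold Measure.bind
      exact congrArg _ (Measure.map_congr (hae.mono fun r h => by simp [h]))
    rw [h1, h2]
    unfold Measure.bind
    rw [show (fun r => (g' r).map e) = (Measure.map e) ∘ g' from rfl,
      ← Measure.map_map (Measure.measurable_map e e.measurable) hmeas,
      Measure.join_map_map e.measurable]
  · have hg2 : ¬ AEMeasurable (fun r => (g r).map e) μ := by
      intro h
      apply hg
      have := (Measure.measurable_map (⇑e.symm) e.symm.measurable).comp_aemeasurable h
      have heq : ((fun ν => Measure.map (⇑e.symm) ν) ∘ fun r => Measure.map (⇑e) (g r)) = g := by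
        funext r
        simp only [Function.comp]
        rw [Measure.map_map e.symm.measurable e.measurable]
        simp
      rwa [heq] at this
    unfold Measure.bind
    rw [Measure.map_of_not_aemeasurable hg, Measure.map_of_not_aemeasurable hg2,
      Measure.join_zero, Measure.map_zero]

/-- If `G_{s,t}` depends on `s, t` only through `t/s`, then `P̃` inherits the
`κ`-scaling property from `P`: `P̃(cs, ct, c^κ x, c^κ dy) = P̃(s,t,x,dy)` for all `c > 0`,
`0 ≤ s ≤ t` and `x`. -/
theorem stmt2 (κ : ℝ) (hκ : 0 < κ) (P : ℝ → ℝ → ℝ → Measure ℝ)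
    (hP : IsTransitionFunction P) (hscal : HasScaling κ P)
    (G : ℝ → Measure ℝ)
    (hGprob : ∀ u, 1 ≤ u → IsProbabilityMeasure (G u))
    (hGsupp : ∀ u, 1 ≤ u → G u ((Set.Ioc (0:ℝ) 1)ᶜ) = 0)
    (hGdirac : G 1 = Measure.dirac 1) :
    HasScaling κ (PtildeR κ P G) := by
  intro c s t x hc hs hst
  have hcκ : (0:ℝ) < c ^ κ := Real.rpow_pos_of_pos hc κ
  set e : ℝ ≃ᵐ ℝ := MeasurableEquiv.mulLeft₀ (c ^ κ) hcκ.ne' with he_def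
  have he : ⇑e = fun y => c ^ κ * y := rfl
  rcases eq_or_lt_of_le hs with hs0 | hs0
  · have hseq : s = 0 := hs0.symm
    subst hseq
    simp only [PtildeR, mul_zero, if_pos rfl]
    have := hscal c 0 t 0 hc le_rfl hst
    simpa using this
  · have hsne : s ≠ 0 := hs0.ne'
    have hcsne : c * s ≠ 0 := by positivity
    have ht : 0 < t := lt_of_lt_of_le hs0 hst
    have hts : (c*t)/(c*s) = t/s := mul_div_mul_left t s hc.ne'
    simp only [PtildeR, if_neg hsne, if_neg hcsne, hts]
    have h1le : (1:ℝ) ≤ t/s := (one_le_div hs0).mpr hst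
    have hae : ∀ᵐ r ∂(G (t/s)), r ∈ Set.Ioc (0:ℝ) 1 :=
      ae_iff.mpr (hGsupp (t/s) h1le)
    have key : ∀ r ∈ Set.Ioc (0:ℝ) 1,
        P (r*(c*t)) (c*t) ((t/s)^κ * r^κ * (c^κ*x))
          = ((P (r*t) t ((t/s)^κ * r^κ * x)).map e) := by
      intro r hr
      have h1 : r*(c*t) = c*(r*t) := by ring
      have h2 : (t/s)^κ * r^κ * (c^κ*x) = c^κ * ((t/s)^κ * r^κ * x) := by ring
      have hrt : 0 ≤ r * t := mul_nonneg hr.1.le ht.le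
      rw [h1, h2, hscal c (r*t) t _ hc hrt (mul_le_of_le_one_left ht.le hr.2), he]
    have hbc : ((G (t/s)).bind fun r => P (r*(c*t)) (c*t) ((t/s)^κ*r^κ*(c^κ*x)))
        = (G (t/s)).bind fun r => (P (r*t) t ((t/s)^κ*r^κ*x)).map e := by
      unfold Measure.bind
      exact congrArg _ (Measure.map_congr (hae.mono fun r hr => key r hr))
    rw [hbc, bind_map_comm, he]

end
end

section
/- Let Z be a càdlàg κ-self-similar process on ℝ, let ζ be a subordinator independent of Z, and for a∈ℝ set X^{(a)}_t = t^κ e^{-κ ζ_{a+ln t}} Z_{exp(ζ_{a+ln t})} for t ≥ e^{-a}. Then for every c>0, every n, and all times t₁<⋯<t_n with t_i ≥ e^{-a} and c t_i ≥ e^{-a} for all i, the random vector (X^{(a)}_{ct₁},…,X^{(a)}_{ct_n}) has the same distribution as c^κ (X^{(a)}_{t₁},…,X^{(a)}_{t_n}). In particular, the process X of the time-change construction is κ-self-similar, and extends to t=0 by X₀=0. -/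
open MeasureTheory ProbabilityTheory Real Filter Set
open scoped ENNReal NNReal

noncomputable section

variable {Ω : Type*} [MeasurableSpace Ω]

/-- A real function is càdlàg on `[0,∞)`: right-continuous everywhere on `[0,∞)`, with left
limits at every `t > 0`. -/
def CadlagOn (f : ℝ → ℝ) : Prop :=
  (∀ t : ℝ, 0 ≤ t → ContinuousWithinAt f (Set.Ici t) t) ∧
  (∀ t : ℝ, 0 < t → ∃ l, Filter.Tendsto f (nhdsWithin t (Set.Iio t)) (nhds l))

/-- `κ`-self-similarity: for every `c > 0` the finite-dimensional distributions of `(X_{ct})`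
and `(c^κ X_t)` agree. -/
def SelfSimilar (κ : ℝ) (X : ℝ → Ω → ℝ) (μ : Measure Ω) : Prop :=
  ∀ c : ℝ, 0 < c → ∀ (n : ℕ) (t : Fin n → ℝ), (∀ i, 0 ≤ t i) →
    Measure.map (fun ω i => X (c * t i) ω) μ
      = Measure.map (fun ω i => c ^ κ * X (t i) ω) μ

/-- Independent increments (over the time domain `[0,∞)`). -/
def HasIndepIncrements (ζ : ℝ → Ω → ℝ) (μ : Measure Ω) : Prop :=
  ∀ (n : ℕ) (t : Fin (n + 1) → ℝ), Monotone t → (∀ i, 0 ≤ t i) →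
    iIndepFun
      (fun (i : Fin n) ω => ζ (t i.succ) ω - ζ (t i.castSucc) ω) μ

/-- Stationary increments: `ζ_{s+t} − ζ_s` is distributed as `ζ_t`. -/
def HasStatIncrements (ζ : ℝ → Ω → ℝ) (μ : Measure Ω) : Prop :=
  ∀ s t : ℝ, 0 ≤ s → 0 ≤ t →
    Measure.map (fun ω => ζ (s + t) ω - ζ s ω) μ = Measure.map (ζ t) μ

/-- A subordinator: a càdlàg process with `ζ₀ = 0`, nondecreasing paths, and independent
stationary increments. -/
structure IsSubordinator (ζ : ℝ → Ω → ℝ) (μ : Measure Ω) : Prop where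
  meas : ∀ t, Measurable (ζ t)
  zero : ∀ ω, ζ 0 ω = 0
  mono : ∀ ω, MonotoneOn (fun t => ζ t ω) (Set.Ici 0)
  cadlag : ∀ ω, CadlagOn fun t => ζ t ω
  stat : HasStatIncrements ζ μ
  indep : _root_.HasIndepIncrements ζ μ

/-- Independence of two processes: the σ-algebras they generate are independent. -/
def IndepProcesses (Z ζ : ℝ → Ω → ℝ) (μ : Measure Ω) : Prop :=
  Indep (⨆ t : ℝ, MeasurableSpace.comap (Z t) inferInstance)
        (⨆ t : ℝ, MeasurableSpace.comap (ζ t) inferInstance) μ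

/-- The time-changed process `X^{(a)}_t = t^κ e^{−κ ζ_{a+ln t}} Z_{exp(ζ_{a+ln t})}`. -/
def Xa (κ : ℝ) (Z ζ : ℝ → Ω → ℝ) (a t : ℝ) (ω : Ω) : ℝ :=
  t ^ κ * Real.exp (-(κ * ζ (a + Real.log t) ω)) * Z (Real.exp (ζ (a + Real.log t) ω)) ω


/-!
Put `s_i = a + log t_i`. Then `X^{(a)}_{t_i} = t_i^κ L(ζ_{s_i})` with `L(u) = e^{-κu} Z_{e^u}` the
Lamperti transform of `Z`, and replacing `t_i` by `c t_i` shifts every `s_i` by `log c`.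
Self-similarity of `Z` makes the law of `(L(u_i))_i` invariant under a common shift of the `u_i`,
so it depends on `u` only through the increments `u_i - u_0`. Since `ζ` is independent of `Z`,
the law of `(L(ζ_{s_i}))_i` is the mixture of these laws over the law of `ζ_s`, hence depends only
on the law of `(ζ_{s_i} - ζ_{s_0})_i`, which by stationarity and independence of the increments
is unchanged by the shift. For the process `X`, choose `b` with all times `≥ e^{-b}`, after
sorting the times and discarding those at `0`, where `X` vanishes.
-/

open scoped Topology

def dyadicCeil (N : ℕ) (x : ℝ) : ℝ := ⌈x * 2 ^ N⌉ / 2 ^ N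

theorem le_dyadicCeil (N : ℕ) (x : ℝ) : x ≤ dyadicCeil N x := by
  rw [dyadicCeil, le_div_iff₀ (by positivity)]
  exact Int.le_ceil _

theorem dyadicCeil_le (N : ℕ) (x : ℝ) : dyadicCeil N x ≤ x + (2 ^ N)⁻¹ := by
  rw [dyadicCeil, div_le_iff₀ (by positivity), add_mul, inv_mul_cancel₀ (by positivity)]
  exact (Int.ceil_lt_add_one _).le

theorem tendsto_dyadicCeil (x : ℝ) : Tendsto (dyadicCeil · x) atTop (𝓝[≥] x) := by
  refine tendsto_nhdsWithin_iff.2 ⟨?_, .of_forall (le_dyadicCeil · x)⟩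
  have h : Tendsto (fun N : ℕ => x + (2 ^ N)⁻¹) atTop (𝓝 x) := by
    simpa using tendsto_const_nhds.add
      (tendsto_inv_atTop_zero.comp (tendsto_pow_atTop_atTop_of_one_lt (one_lt_two : (1 : ℝ) < 2)))
  exact tendsto_of_tendsto_of_tendsto_of_le_of_le tendsto_const_nhds h
    (le_dyadicCeil · x) (dyadicCeil_le · x)

theorem measurable_apply_dyadicCeil (N : ℕ) :
    Measurable fun p : ℝ × (ℝ → ℝ) => p.2 (dyadicCeil N p.1) := by
  have h : Measurable fun q : ℤ × (ℝ → ℝ) => q.2 (q.1 / 2 ^ N) :=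
    measurable_from_prod_countable_right fun k : ℤ => measurable_pi_apply ((k : ℝ) / 2 ^ N)
  exact h.comp ((Int.measurable_ceil.comp (measurable_fst.mul_const _)).prodMk measurable_snd)

/-- Unlike evaluation `(x, f) ↦ f x`, this is jointly measurable for the product σ-algebra on
`ℝ → ℝ`, and it agrees with `f x` wherever `f` is right-continuous. -/
def dyadicRightLim (x : ℝ) (f : ℝ → ℝ) : ℝ := limUnder atTop fun N => f (dyadicCeil N x)

theorem measurable_dyadicRightLim :
    Measurable fun p : ℝ × (ℝ → ℝ) => dyadicRightLim p.1 p.2 :=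
  (StronglyMeasurable.limUnder fun N => (measurable_apply_dyadicCeil N).stronglyMeasurable)
    |>.measurable

theorem dyadicRightLim_eq {f : ℝ → ℝ} {x : ℝ} (hf : ContinuousWithinAt f (Ici x) x) :
    dyadicRightLim x f = f x :=
  (hf.tendsto.comp (tendsto_dyadicCeil x)).limUnder_eq

def lamperti (κ : ℝ) (f : ℝ → ℝ) (u : ℝ) : ℝ := exp (-(κ * u)) * f (exp u)

theorem lamperti_dyadicRightLim {κ : ℝ} {f : ℝ → ℝ} (hf : CadlagOn f) (u : ℝ) :
    lamperti κ (dyadicRightLim · f) u = lamperti κ f u := by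
  rw [lamperti, lamperti, dyadicRightLim_eq (hf.1 _ (exp_pos u).le)]

theorem measurable_lamperti_dyadicRightLim (κ : ℝ) :
    Measurable fun p : ℝ × (ℝ → ℝ) => lamperti κ (dyadicRightLim · p.2) p.1 := by
  have h₁ : Measurable fun p : ℝ × (ℝ → ℝ) => exp (-(κ * p.1)) := by fun_prop
  have h₂ : Measurable fun p : ℝ × (ℝ → ℝ) => dyadicRightLim (exp p.1) p.2 :=
    measurable_dyadicRightLim.comp (f := fun p : ℝ × (ℝ → ℝ) => (exp p.1, p.2))
      ((measurable_exp.comp measurable_fst).prodMk measurable_snd)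
  exact h₁.mul h₂

theorem Xa_eq_lamperti {α : Type*} (κ : ℝ) (Z ζ : ℝ → α → ℝ) (a u : ℝ) (ω : α) :
    Xa κ Z ζ a u ω = u ^ κ * lamperti κ (Z · ω) (ζ (a + log u) ω) :=
  mul_assoc _ _ _

theorem measurable_lamperti_comp {κ : ℝ} {Z : ℝ → Ω → ℝ} (hZmeas : ∀ t, Measurable (Z t))
    (hZcadlag : ∀ ω, CadlagOn fun t => Z t ω) {V : Ω → ℝ} (hV : Measurable V) :
    Measurable fun ω => lamperti κ (Z · ω) (V ω) := by
  simp_rw [← lamperti_dyadicRightLim (hZcadlag _)]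
  exact (measurable_lamperti_dyadicRightLim κ).comp (hV.prodMk (measurable_pi_lambda _ hZmeas))

theorem measurable_Xa {κ : ℝ} {Z ζ : ℝ → Ω → ℝ} (hZmeas : ∀ t, Measurable (Z t))
    (hZcadlag : ∀ ω, CadlagOn fun t => Z t ω) (hζmeas : ∀ t, Measurable (ζ t)) (a u : ℝ) :
    Measurable (Xa κ Z ζ a u) := by
  simp_rw [funext (Xa_eq_lamperti κ Z ζ a u)]
  exact measurable_const.mul (measurable_lamperti_comp hZmeas hZcadlag (hζmeas _))

theorem measurable_partialSum (m : ℕ) :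
    Measurable (Fin.partialSum : (Fin m → ℝ) → Fin (m + 1) → ℝ) := by
  refine measurable_pi_lambda _ fun i => ?_
  induction i using Fin.induction with
  | zero => simp only [Fin.partialSum_zero]; exact measurable_const
  | succ j ih => simp only [Fin.partialSum_succ]; exact ih.add (measurable_pi_apply j)

theorem Fin.partialSum_succ_sub_castSucc (m : ℕ) (f : Fin (m + 1) → ℝ) (i : Fin (m + 1)) :
    Fin.partialSum (fun j => f j.succ - f j.castSucc) i = f i - f 0 := by
  have h := congrFun (Fin.partialSum_left_neg f) i
  simp only [Pi.vadd_apply, vadd_eq_add, neg_add_eq_sub] at h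
  linarith

section Subordinator

variable {μ : Measure Ω} {ζ : ℝ → Ω → ℝ}

theorem IsSubordinator.map_increments (hζ : IsSubordinator ζ μ) {m : ℕ}
    {s : Fin (m + 1) → ℝ} (hs : Monotone s) (hs0 : ∀ i, 0 ≤ s i) :
    μ.map (fun ω (j : Fin m) => ζ (s j.succ) ω - ζ (s j.castSucc) ω)
      = Measure.pi fun j => μ.map (ζ (s j.succ - s j.castSucc)) := by
  have hmeas (j : Fin m) : Measurable fun ω => ζ (s j.succ) ω - ζ (s j.castSucc) ω :=
    (hζ.meas _).sub (hζ.meas _)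
  rw [(hζ.indep m s hs hs0).map_fun_eq_pi_map fun j => (hmeas j).aemeasurable]
  refine congrArg Measure.pi (funext fun j => ?_)
  simpa using hζ.stat (s j.castSucc) (s j.succ - s j.castSucc) (hs0 _)
    (sub_nonneg.2 (hs (Fin.castSucc_le_succ j)))

theorem IsSubordinator.map_sub_eq_partialSum (hζ : IsSubordinator ζ μ) {m : ℕ}
    {s : Fin (m + 1) → ℝ} (hs : Monotone s) (hs0 : ∀ i, 0 ≤ s i) :
    μ.map (fun ω i => ζ (s i) ω - ζ (s 0) ω)
      = (Measure.pi fun j => μ.map (ζ (s j.succ - s j.castSucc))).map Fin.partialSum := by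
  have hmeas : Measurable fun ω (j : Fin m) => ζ (s j.succ) ω - ζ (s j.castSucc) ω :=
    measurable_pi_lambda _ fun j => (hζ.meas _).sub (hζ.meas _)
  rw [← hζ.map_increments hs hs0, Measure.map_map (measurable_partialSum m) hmeas]
  congr with ω i
  exact (Fin.partialSum_succ_sub_castSucc m (fun i => ζ (s i) ω) i).symm

theorem IsSubordinator.map_sub_add_eq (hζ : IsSubordinator ζ μ) {m : ℕ}
    {s : Fin (m + 1) → ℝ} (hs : Monotone s) (hs0 : ∀ i, 0 ≤ s i) {r : ℝ}
    (hsr : ∀ i, 0 ≤ s i + r) :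
    μ.map (fun ω i => ζ (s i + r) ω - ζ (s 0 + r) ω)
      = μ.map (fun ω i => ζ (s i) ω - ζ (s 0) ω) := by
  rw [hζ.map_sub_eq_partialSum hs hs0,
    hζ.map_sub_eq_partialSum (s := (s · + r)) (fun i j hij => by simpa using hs hij) hsr]
  simp only [add_sub_add_right_eq_sub]

end Subordinator

theorem SelfSimilar.map_lamperti_add {μ : Measure Ω} {κ : ℝ} {Z : ℝ → Ω → ℝ}
    (hZ : SelfSimilar κ Z μ) (hZmeas : ∀ t, Measurable (Z t)) {n : ℕ} (u : Fin n → ℝ)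
    (r : ℝ) :
    μ.map (fun ω i => lamperti κ (Z · ω) (u i + r))
      = μ.map (fun ω i => lamperti κ (Z · ω) (u i)) := by
  let M : (Fin n → ℝ) → Fin n → ℝ := fun v i => exp (-(κ * (u i + r))) * v i
  have hM : Measurable M := measurable_pi_lambda _ fun i => (measurable_pi_apply i).const_mul _
  have h := congrArg (Measure.map M)
    (hZ (exp r) (exp_pos r) n (fun i => exp (u i)) fun i => (exp_pos _).le)
  rw [Measure.map_map hM (measurable_pi_lambda _ fun i => hZmeas _),
    Measure.map_map hM (measurable_pi_lambda _ fun i => (hZmeas _).const_mul _)] at h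
  convert h using 2 with ω <;> ext i
  · simp only [lamperti, M, Function.comp_apply, exp_add, mul_comm (exp r)]
  · simp only [lamperti, M, Function.comp_apply]
    rw [rpow_def_of_pos (exp_pos r), log_exp, ← mul_assoc, ← exp_add]
    ring_nf

theorem IndepProcesses.indepFun {μ : Measure Ω} {Z ζ : ℝ → Ω → ℝ} (h : IndepProcesses Z ζ μ)
    {ι : Type*} (s : ι → ℝ) :
    IndepFun (fun ω i => ζ (s i) ω) (fun ω x => Z x ω) μ := by
  have hζ : @Measurable Ω (ι → ℝ) (⨆ x, MeasurableSpace.comap (ζ x) inferInstance) _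
      fun ω i => ζ (s i) ω :=
    @measurable_pi_lambda Ω ι (fun _ => ℝ) (⨆ x, MeasurableSpace.comap (ζ x) inferInstance) _ _
      fun i => measurable_iff_comap_le.2 (le_iSup_of_le (s i) le_rfl)
  have hZ : @Measurable Ω (ℝ → ℝ) (⨆ x, MeasurableSpace.comap (Z x) inferInstance) _
      fun ω x => Z x ω :=
    @measurable_pi_lambda Ω ℝ (fun _ => ℝ) (⨆ x, MeasurableSpace.comap (Z x) inferInstance) _ _
      fun x => measurable_iff_comap_le.2 (le_iSup_of_le x le_rfl)
  exact indep_of_indep_of_le_right (indep_of_indep_of_le_left h.symm hζ.comap_le) hZ.comap_le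

section Mixture

variable {α β γ : Type*} [MeasurableSpace α] [MeasurableSpace β] [MeasurableSpace γ]
  {μ : Measure Ω} {F : Ω → β} {Ψ : α × β → γ}

theorem map_apply_prodMk_left (hF : Measurable F) (hΨ : Measurable Ψ) (u : α) {A : Set γ}
    (hA : MeasurableSet A) :
    μ.map (fun ω => Ψ (u, F ω)) A = μ.map F (Prod.mk u ⁻¹' (Ψ ⁻¹' A)) := by
  rw [Measure.map_apply (f := fun ω => Ψ (u, F ω))
      (hΨ.comp (measurable_prodMk_left.comp hF)) hA,
    Measure.map_apply hF (measurable_prodMk_left (hΨ hA))]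
  rfl

theorem ProbabilityTheory.IndepFun.map_apply_eq_lintegral [IsFiniteMeasure μ] {G : Ω → α}
    (h : IndepFun G F μ) (hG : Measurable G) (hF : Measurable F) (hΨ : Measurable Ψ)
    {A : Set γ} (hA : MeasurableSet A) :
    μ.map (fun ω => Ψ (G ω, F ω)) A = ∫⁻ u, μ.map (fun ω => Ψ (u, F ω)) A ∂μ.map G := by
  rw [show (fun ω => Ψ (G ω, F ω)) = Ψ ∘ fun ω => (G ω, F ω) from rfl,
    ← Measure.map_map hΨ (hG.prodMk hF),
    (indepFun_iff_map_prod_eq_prod_map_map hG.aemeasurable hF.aemeasurable).1 h,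
    Measure.map_apply hΨ hA, Measure.prod_apply (hΨ hA)]
  simp_rw [map_apply_prodMk_left hF hΨ _ hA]

theorem ProbabilityTheory.IndepFun.map_eq_of_map_comp_eq [IsFiniteMeasure μ] {G G' : Ω → α}
    {φ : α → α} (h : IndepFun G F μ) (h' : IndepFun G' F μ) (hG : Measurable G)
    (hG' : Measurable G') (hF : Measurable F)
    (hΨ : Measurable Ψ) (hφ : Measurable φ) (hlaw : μ.map (φ ∘ G) = μ.map (φ ∘ G'))
    (hinv : ∀ u, μ.map (fun ω => Ψ (u, F ω)) = μ.map (fun ω => Ψ (φ u, F ω))) :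
    μ.map (fun ω => Ψ (G ω, F ω)) = μ.map (fun ω => Ψ (G' ω, F ω)) := by
  ext A hA
  let g u := μ.map (fun ω => Ψ (u, F ω)) A
  have hg : Measurable g := by
    simp_rw [g, map_apply_prodMk_left hF hΨ _ hA]
    exact measurable_measure_prodMk_left (hΨ hA)
  have hgφ (u : α) : g u = g (φ u) := by simp only [g, hinv u]
  calc μ.map (fun ω => Ψ (G ω, F ω)) A
      = ∫⁻ u, g (φ u) ∂μ.map G := by
        rw [h.map_apply_eq_lintegral hG hF hΨ hA]; exact lintegral_congr hgφ
    _ = ∫⁻ v, g v ∂μ.map (φ ∘ G) := by rw [← Measure.map_map hφ hG, lintegral_map hg hφ]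
    _ = ∫⁻ u, g (φ u) ∂μ.map G' := by rw [hlaw, ← Measure.map_map hφ hG', lintegral_map hg hφ]
    _ = μ.map (fun ω => Ψ (G' ω, F ω)) A := by
        rw [h'.map_apply_eq_lintegral hG' hF hΨ hA]; exact (lintegral_congr hgφ).symm

end Mixture

theorem map_lamperti_comp_add_eq {μ : Measure Ω} [IsProbabilityMeasure μ] {κ : ℝ}
    {Z ζ : ℝ → Ω → ℝ} (hZmeas : ∀ t, Measurable (Z t)) (hZcadlag : ∀ ω, CadlagOn fun t => Z t ω)
    (hZss : SelfSimilar κ Z μ) (hζ : IsSubordinator ζ μ) (hindep : IndepProcesses Z ζ μ)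
    {m : ℕ} {s : Fin (m + 1) → ℝ} (hs : Monotone s) (hs0 : ∀ i, 0 ≤ s i) {r : ℝ}
    (hsr : ∀ i, 0 ≤ s i + r) :
    μ.map (fun ω i => lamperti κ (Z · ω) (ζ (s i + r) ω))
      = μ.map (fun ω i => lamperti κ (Z · ω) (ζ (s i) ω)) := by
  let F : Ω → ℝ → ℝ := fun ω x => Z x ω
  let Ψ : (Fin (m + 1) → ℝ) × (ℝ → ℝ) → Fin (m + 1) → ℝ :=
    fun p i => lamperti κ (dyadicRightLim · p.2) (p.1 i)
  have hF : Measurable F := measurable_pi_lambda _ hZmeas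
  have hΨ : Measurable Ψ := measurable_pi_lambda _ fun i =>
    (measurable_lamperti_dyadicRightLim κ).comp
      (f := fun p : (Fin (m + 1) → ℝ) × (ℝ → ℝ) => (p.1 i, p.2))
      (((measurable_pi_apply i).comp measurable_fst).prodMk measurable_snd)
  have hG (r : ℝ) : Measurable fun ω i => ζ (s i + r) ω :=
    measurable_pi_lambda _ fun i => hζ.meas _
  have hΨF (u : Fin (m + 1) → ℝ) (ω : Ω) : Ψ (u, F ω) = fun i => lamperti κ (Z · ω) (u i) :=
    funext fun i => lamperti_dyadicRightLim (hZcadlag ω) _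
  have hlaw : ∀ r : ℝ, (fun ω i => lamperti κ (Z · ω) (ζ (s i + r) ω))
      = fun ω => Ψ (fun i => ζ (s i + r) ω, F ω) := fun r => funext fun ω => (hΨF _ ω).symm
  calc μ.map (fun ω i => lamperti κ (Z · ω) (ζ (s i + r) ω))
      = μ.map fun ω => Ψ (fun i => ζ (s i + r) ω, F ω) := by rw [hlaw]
    _ = μ.map fun ω => Ψ (fun i => ζ (s i + 0) ω, F ω) := by
      refine (hindep.indepFun _).map_eq_of_map_comp_eq (hindep.indepFun _) (hG _) (hG _) hF hΨ
        (φ := fun u i => u i - u 0) ?_ ?_ fun u => ?_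
      · exact measurable_pi_lambda _ fun i => (measurable_pi_apply i).sub (measurable_pi_apply 0)
      · simpa [Function.comp_def] using hζ.map_sub_add_eq hs hs0 hsr
      · simp_rw [hΨF]
        simpa only [sub_add_cancel] using hZss.map_lamperti_add hZmeas (fun i => u i - u 0) (u 0)
    _ = μ.map (fun ω i => lamperti κ (Z · ω) (ζ (s i) ω)) := by rw [← hlaw]; simp only [add_zero]

theorem map_Xa_mul_eq {μ : Measure Ω} [IsProbabilityMeasure μ] {κ : ℝ} {Z ζ : ℝ → Ω → ℝ}
    (hZmeas : ∀ t, Measurable (Z t)) (hZcadlag : ∀ ω, CadlagOn fun t => Z t ω)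
    (hZss : SelfSimilar κ Z μ) (hζ : IsSubordinator ζ μ) (hindep : IndepProcesses Z ζ μ)
    {a c : ℝ} (hc : 0 < c) {n : ℕ} {t : Fin n → ℝ} (ht : Monotone t)
    (hta : ∀ i, exp (-a) ≤ t i) (hcta : ∀ i, exp (-a) ≤ c * t i) :
    μ.map (fun ω i => Xa κ Z ζ a (c * t i) ω)
      = μ.map (fun ω i => c ^ κ * Xa κ Z ζ a (t i) ω) := by
  cases n with
  | zero => congr 1; exact Subsingleton.elim _ _
  | succ m =>
  have htpos (i : Fin (m + 1)) : 0 < t i := (exp_pos _).trans_le (hta i)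
  let s : Fin (m + 1) → ℝ := fun i => a + log (t i)
  have hs : Monotone s := fun i j hij => by
    have := log_le_log (htpos i) (ht hij)
    simp only [s]; linarith
  have hs0 (i : Fin (m + 1)) : 0 ≤ s i := by
    have := (le_log_iff_exp_le (htpos i)).2 (hta i)
    simp only [s]; linarith
  have hlog (i : Fin (m + 1)) : a + log (c * t i) = s i + log c := by
    simp only [s, log_mul hc.ne' (htpos i).ne']; ring
  have hsc0 (i : Fin (m + 1)) : 0 ≤ s i + log c := by
    have := (le_log_iff_exp_le (mul_pos hc (htpos i))).2 (hcta i)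
    linarith [hlog i]
  let D : (Fin (m + 1) → ℝ) → Fin (m + 1) → ℝ := fun v i => (c * t i) ^ κ * v i
  have hD : Measurable D := measurable_pi_lambda _ fun i => (measurable_pi_apply i).const_mul _
  have hV (v : Fin (m + 1) → ℝ) : Measurable fun ω i => lamperti κ (Z · ω) (ζ (v i) ω) :=
    measurable_pi_lambda _ fun i => measurable_lamperti_comp hZmeas hZcadlag (hζ.meas _)
  have hL : (fun ω i => Xa κ Z ζ a (c * t i) ω)
      = D ∘ fun ω i => lamperti κ (Z · ω) (ζ (s i + log c) ω) := by
    ext ω i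
    simp only [Function.comp_apply, D, Xa_eq_lamperti, hlog]
  have hR : (fun ω i => c ^ κ * Xa κ Z ζ a (t i) ω)
      = D ∘ fun ω i => lamperti κ (Z · ω) (ζ (s i) ω) := by
    ext ω i
    simp only [Function.comp_apply, D, Xa_eq_lamperti,
      mul_rpow hc.le (htpos i).le, mul_assoc, s]
  rw [hL, hR, ← Measure.map_map hD (hV (s · + log c)), ← Measure.map_map hD (hV s),
    map_lamperti_comp_add_eq hZmeas hZcadlag hZss hζ hindep hs hs0 hsc0]

section FiniteDimensional

variable {μ : Measure Ω} {Y Y' : ℝ → Ω → ℝ}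

theorem map_pi_eq_of_monotone (hY : ∀ s, Measurable (Y s)) (hY' : ∀ s, Measurable (Y' s))
    {p : ℝ → Prop} {n : ℕ}
    (h : ∀ t : Fin n → ℝ, Monotone t → (∀ i, p (t i)) →
      μ.map (fun ω i => Y (t i) ω) = μ.map (fun ω i => Y' (t i) ω))
    (t : Fin n → ℝ) (ht : ∀ i, p (t i)) :
    μ.map (fun ω i => Y (t i) ω) = μ.map (fun ω i => Y' (t i) ω) := by
  let σ := Tuple.sort t
  let R : (Fin n → ℝ) → Fin n → ℝ := fun v i => v (σ.symm i)
  have hR : Measurable R := measurable_pi_lambda _ fun i => measurable_pi_apply _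
  have hsort (W : ℝ → Ω → ℝ) (hW : ∀ s, Measurable (W s)) :
      μ.map (fun ω i => W (t i) ω) = (μ.map fun ω i => W (t (σ i)) ω).map R := by
    rw [Measure.map_map hR (measurable_pi_lambda _ fun i => hW _)]
    congr 1
    funext ω i
    simp [R]
  rw [hsort Y hY, hsort Y' hY', h (fun i => t (σ i)) (Tuple.monotone_sort t) fun i => ht _]

/-- Coordinates at time `0` are a.s. zero on both sides, so they can be moved to time `1`. -/
theorem map_pi_eq_of_pos (hY : ∀ s, Measurable (Y s)) (hY' : ∀ s, Measurable (Y' s))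
    (hY0 : ∀ᵐ ω ∂μ, Y 0 ω = 0) (hY'0 : ∀ᵐ ω ∂μ, Y' 0 ω = 0) {n : ℕ}
    (h : ∀ t : Fin n → ℝ, (∀ i, 0 < t i) →
      μ.map (fun ω i => Y (t i) ω) = μ.map (fun ω i => Y' (t i) ω))
    (t : Fin n → ℝ) (ht : ∀ i, 0 ≤ t i) :
    μ.map (fun ω i => Y (t i) ω) = μ.map (fun ω i => Y' (t i) ω) := by
  let t' : Fin n → ℝ := fun i => if t i = 0 then 1 else t i
  have ht' (i : Fin n) : 0 < t' i := by
    by_cases hi : t i = 0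
    · simp [t', hi]
    · simpa [t', hi] using (ht i).lt_of_ne' hi
  let R : (Fin n → ℝ) → Fin n → ℝ := fun v i => if t i = 0 then 0 else v i
  have hR : Measurable R := measurable_pi_lambda _ fun i => by
    by_cases hi : t i = 0
    · simp [R, hi]
    · simpa [R, hi] using measurable_pi_apply i
  have hzero (W : ℝ → Ω → ℝ) (hW : ∀ s, Measurable (W s)) (hW0 : ∀ᵐ ω ∂μ, W 0 ω = 0) :
      μ.map (fun ω i => W (t i) ω) = (μ.map fun ω i => W (t' i) ω).map R := by
    rw [Measure.map_map hR (measurable_pi_lambda _ fun i => hW _)]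
    refine Measure.map_congr ?_
    filter_upwards [hW0] with ω hω
    funext i
    by_cases hi : t i = 0 <;> simp [R, t', hi, hω]
  rw [hzero Y hY hY0, hzero Y' hY' hY'0, h t' ht']

end FiniteDimensional

theorem selfSimilar_of_map_eq {μ : Measure Ω} {κ : ℝ} {W : ℝ → ℝ → Ω → ℝ}
    (hW : ∀ b u, Measurable (W b u))
    (hscale : ∀ b c : ℝ, 0 < c → ∀ (n : ℕ) (t : Fin n → ℝ), Monotone t →
      (∀ i, exp (-b) ≤ t i) → (∀ i, exp (-b) ≤ c * t i) →
      μ.map (fun ω i => W b (c * t i) ω) = μ.map (fun ω i => c ^ κ * W b (t i) ω))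
    {Ω' : Type*} [MeasurableSpace Ω'] {ν : Measure Ω'} {X : ℝ → Ω' → ℝ}
    (hX : ∀ t, Measurable (X t))
    (hfdd : ∀ (b : ℝ) (n : ℕ) (t : Fin n → ℝ), (∀ i, exp (-b) ≤ t i) →
      ν.map (fun ω i => X (t i) ω) = μ.map (fun ω i => W b (t i) ω))
    (hX0 : ∀ᵐ ω ∂ν, X 0 ω = 0) :
    SelfSimilar κ X ν := by
  intro c hc n
  have hcX (s : ℝ) : Measurable fun ω => c ^ κ * X s ω := (hX s).const_mul _
  refine map_pi_eq_of_pos (Y := fun s ω => X (c * s) ω) (fun s => hX _) hcX (by simpa using hX0)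
    (by filter_upwards [hX0] with ω hω; simp [hω]) fun t ht => ?_
  refine map_pi_eq_of_monotone (fun s => hX _) hcX (p := (0 < ·)) (fun t hmono htpos => ?_) t ht
  obtain ⟨L, hL⟩ := (Set.finite_range fun i => min (log (t i)) (log (c * t i))).bddBelow
  have hb (i : Fin n) : exp (-(-L)) ≤ t i ∧ exp (-(-L)) ≤ c * t i := by
    have hLi : L ≤ min (log (t i)) (log (c * t i)) := hL ⟨i, rfl⟩
    rw [neg_neg]
    exact ⟨(exp_le_exp.2 (hLi.trans (min_le_left _ _))).trans_eq (exp_log (htpos i)),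
      (exp_le_exp.2 (hLi.trans (min_le_right _ _))).trans_eq (exp_log (mul_pos hc (htpos i)))⟩
  let S : (Fin n → ℝ) → Fin n → ℝ := fun v i => c ^ κ * v i
  have hS : Measurable S := measurable_pi_lambda _ fun i => (measurable_pi_apply i).const_mul _
  calc ν.map (fun ω i => X (c * t i) ω)
      = μ.map (fun ω i => W (-L) (c * t i) ω) := hfdd _ _ _ fun i => (hb i).2
    _ = μ.map (fun ω i => c ^ κ * W (-L) (t i) ω) :=
        hscale _ c hc n t hmono (fun i => (hb i).1) fun i => (hb i).2
    _ = (μ.map fun ω i => W (-L) (t i) ω).map S :=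
        (Measure.map_map hS (measurable_pi_lambda _ fun i => hW _ _)).symm
    _ = (ν.map fun ω i => X (t i) ω).map S := by rw [hfdd _ _ _ fun i => (hb i).1]
    _ = ν.map (fun ω i => c ^ κ * X (t i) ω) :=
        Measure.map_map hS (measurable_pi_lambda _ fun i => hX _)

theorem stmt7_general {Ω : Type*} [MeasurableSpace Ω] (μ : Measure Ω) [IsProbabilityMeasure μ]
    (κ : ℝ) (Z ζ : ℝ → Ω → ℝ)
    (hZmeas : ∀ t, Measurable (Z t))
    (hZcadlag : ∀ ω, CadlagOn fun t => Z t ω)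
    (hZss : SelfSimilar κ Z μ)
    (hζ : IsSubordinator ζ μ)
    (hindep : IndepProcesses Z ζ μ)
    (a : ℝ) :
    -- the scaling identity for finite-dimensional vectors of `X^{(a)}`
    (∀ c : ℝ, 0 < c → ∀ (n : ℕ) (t : Fin n → ℝ), StrictMono t →
      (∀ i, Real.exp (-a) ≤ t i) → (∀ i, Real.exp (-a) ≤ c * t i) →
      Measure.map (fun ω i => Xa κ Z ζ a (c * t i) ω) μ
        = Measure.map (fun ω i => c ^ κ * Xa κ Z ζ a (t i) ω) μ) ∧
    -- in particular, the process of the time-change construction is `κ`-self-similar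
    -- (with the extension `X₀ = 0`)
    (∀ (Ω' : Type) [MeasurableSpace Ω'], ∀ (ν : Measure Ω') (X : ℝ → Ω' → ℝ),
      IsProbabilityMeasure ν → (∀ t, Measurable (X t)) →
      (∀ (b : ℝ) (n : ℕ) (t : Fin n → ℝ), (∀ i, Real.exp (-b) ≤ t i) →
        Measure.map (fun ω i => X (t i) ω) ν
          = Measure.map (fun ω i => Xa κ Z ζ b (t i) ω) μ) →
      (∀ᵐ ω ∂ν, X 0 ω = 0) →
      SelfSimilar κ X ν) := by
  have hscale : ∀ b c : ℝ, 0 < c → ∀ (n : ℕ) (t : Fin n → ℝ), Monotone t →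
      (∀ i, exp (-b) ≤ t i) → (∀ i, exp (-b) ≤ c * t i) →
      μ.map (fun ω i => Xa κ Z ζ b (c * t i) ω) = μ.map (fun ω i => c ^ κ * Xa κ Z ζ b (t i) ω) :=
    fun b c hc n t ht => map_Xa_mul_eq hZmeas hZcadlag hZss hζ hindep hc ht
  exact ⟨fun c hc n t ht => hscale a c hc n t ht.monotone,
    fun Ω' _ ν X _ hX hfdd hX0 =>
      selfSimilar_of_map_eq (measurable_Xa hZmeas hZcadlag hζ.meas) hscale hX hfdd hX0⟩

/-- For a càdlàg `κ`-self-similar process `Z` and a subordinator `ζ`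
independent of `Z`, with `X^{(a)}_t = t^κ e^{−κ ζ_{a+ln t}} Z_{exp(ζ_{a+ln t})}` for
`t ≥ e^{−a}`: for every `c > 0` and all times `t₁ < ⋯ < t_n` with `t_i ≥ e^{−a}` and
`c t_i ≥ e^{−a}`, the vector `(X^{(a)}_{c t₁}, …, X^{(a)}_{c t_n})` is distributed as
`c^κ (X^{(a)}_{t₁}, …, X^{(a)}_{t_n})`. In particular, any process `X` whose
finite-dimensional distributions agree with those of `X^{(a)}` on `[e^{−a}, ∞)` for every `a`,
and which starts at `0`, is `κ`-self-similar (so the construction extends to `t = 0` with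
`X₀ = 0`). -/
theorem stmt7 {Ω : Type*} [MeasurableSpace Ω] (μ : Measure Ω) [IsProbabilityMeasure μ]
    (κ : ℝ) (hκ : 0 < κ) (Z ζ : ℝ → Ω → ℝ)
    (hZmeas : ∀ t, Measurable (Z t))
    (hZcadlag : ∀ ω, CadlagOn fun t => Z t ω)
    (hZss : SelfSimilar κ Z μ)
    (hζ : IsSubordinator ζ μ)
    (hindep : IndepProcesses Z ζ μ)
    (a : ℝ) :
    -- the scaling identity for finite-dimensional vectors of `X^{(a)}`
    (∀ c : ℝ, 0 < c → ∀ (n : ℕ) (t : Fin n → ℝ), StrictMono t →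
      (∀ i, Real.exp (-a) ≤ t i) → (∀ i, Real.exp (-a) ≤ c * t i) →
      Measure.map (fun ω i => Xa κ Z ζ a (c * t i) ω) μ
        = Measure.map (fun ω i => c ^ κ * Xa κ Z ζ a (t i) ω) μ) ∧
    -- in particular, the process of the time-change construction is `κ`-self-similar
    -- (with the extension `X₀ = 0`)
    (∀ (Ω' : Type) [MeasurableSpace Ω'], ∀ (ν : Measure Ω') (X : ℝ → Ω' → ℝ),
      IsProbabilityMeasure ν → (∀ t, Measurable (X t)) →
      (∀ (b : ℝ) (n : ℕ) (t : Fin n → ℝ), (∀ i, Real.exp (-b) ≤ t i) →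
        Measure.map (fun ω i => X (t i) ω) ν
          = Measure.map (fun ω i => Xa κ Z ζ b (t i) ω) μ) →
      (∀ᵐ ω ∂ν, X 0 ω = 0) →
      SelfSimilar κ X ν) :=
  stmt7_general μ κ Z ζ hZmeas hZcadlag hZss hζ hindep a

end
end
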